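/- Let K be a field. The Nagata automorphism ν = (x−2y(y²+xz)−z(y²+xz)², y+z(y²+xz)) of K[z][x,y] (which fixes z) is z-wild: it does not lie in the subgroup of z-automorphisms generated by the z-affine and the z-triangular automorphisms. -/

import Mathlib

noncomputable section

open MvPolynomial

variable (K : Type*) [Field K]

/-- `z`-affine automorphisms of `K[x,y,z]`: they fix `z` and are affine in `x,y` with
coefficients `αᵢⱼ ∈ K` and free terms in `K[z]`. -/
def IsZAffine (φ : MvPolynomial (Fin 3) K ≃ₐ[K] MvPolynomial (Fin 3) K) : Prop :=
  φ (X 2) = X 2 ∧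
  ∃ (a : Matrix (Fin 2) (Fin 2) K) (b : Fin 2 → Polynomial K),
    IsUnit a.det ∧
    φ (X 0) = C (a 0 0) * X 0 + C (a 1 0) * X 1 + Polynomial.aeval (X 2) (b 0) ∧
    φ (X 1) = C (a 0 1) * X 0 + C (a 1 1) * X 1 + Polynomial.aeval (X 2) (b 1)

/-- `z`-triangular automorphisms of `K[x,y,z]`. -/
def IsZTriangular (φ : MvPolynomial (Fin 3) K ≃ₐ[K] MvPolynomial (Fin 3) K) : Prop :=
  φ (X 2) = X 2 ∧
  ∃ (α₁ α₂ : Kˣ) (p₁ : MvPolynomial (Fin 2) K) (p₂ : Polynomial K),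
    φ (X 0) = C (α₁ : K) * X 0 + aeval ![X 1, X 2] p₁ ∧
    φ (X 1) = C (α₂ : K) * X 1 + Polynomial.aeval (X 2) p₂

/-- The subgroup of `z`-tame automorphisms of `K[x,y,z]`. -/
def ZTame : Subgroup (MvPolynomial (Fin 3) K ≃ₐ[K] MvPolynomial (Fin 3) K) :=
  Subgroup.closure {φ | IsZAffine K φ ∨ IsZTriangular K φ}

/-!
Work in the larger group generated by the affine automorphisms over `K[z]` (matrix in
`GL₂(K[z])`) and the triangular ones, and grade by total degree in `x, y` over `K[z]`. Every
element of that group is `ψ * a` with `a` affine and `ψ` a reduced word, alternating between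
non-triangular affine and non-affine triangular letters. Each triangular letter has `y`-degree
`d ≥ 2` and raises the degree of the image of `x` to `d` times that of the image of `y`, so the top
component of `ψ x` is `c * (top of ψ y) ^ d` with `c ∈ K[z]`. The last affine letter `a` either
makes `deg φ x ≤ deg φ y`, or is triangular itself and preserves that power relation. For `ν`,
`deg ν x = 4 > 2 = deg ν y`, and the top components `-z y⁴`, `z y²` would give `-z = c z ^ d` in
`K[z]`.
-/

namespace Nagata

open scoped Polynomial Matrix

variable {K}

local notation "K[x,y,z]" => MvPolynomial (Fin 3) K

def ofZ : K[X] →+* K[x,y,z] := (Polynomial.aeval (X 2)).toRingHom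

lemma ofZ_apply (r : K[X]) : ofZ r = Polynomial.aeval (X 2 : K[x,y,z]) r := rfl

@[simp] lemma ofZ_X : ofZ (Polynomial.X : K[X]) = X 2 := Polynomial.aeval_X _

@[simp] lemma ofZ_C (a : K) : ofZ (Polynomial.C a) = C a := by
  simp [ofZ_apply, algebraMap_eq]

def evalXY (u v : K[X]) : K[x,y,z] →ₐ[K] K[X] := aeval ![u, v, Polynomial.X]

@[simp] lemma evalXY_ofZ (u v r : K[X]) : evalXY u v (ofZ r) = r := by
  rw [ofZ_apply, ← Polynomial.aeval_algHom_apply]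
  simp [evalXY]

lemma ofZ_injective : Function.Injective (ofZ : K[X] → K[x,y,z]) :=
  Function.LeftInverse.injective (evalXY_ofZ 0 0)

lemma algEquiv_apply_C (φ : K[x,y,z] ≃ₐ[K] K[x,y,z]) (a : K) : φ (C a) = C a := by
  simpa [algebraMap_eq] using φ.commutes a

lemma apply_ofZ {φ : K[x,y,z] ≃ₐ[K] K[x,y,z]} (h : φ (X 2) = X 2) (r : K[X]) :
    φ (ofZ r) = ofZ r := by
  rw [ofZ_apply, ← Polynomial.aeval_algHom_apply, h]

lemma apply_eval₂_ofZ {φ : K[x,y,z] ≃ₐ[K] K[x,y,z]} (h : φ (X 2) = X 2) (g : K[x,y,z])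
    (q : K[X][X]) : φ (q.eval₂ ofZ g) = q.eval₂ ofZ (φ g) := by
  rw [← RingHom.coe_coe φ, Polynomial.hom_eval₂]
  congr 1
  exact RingHom.ext (apply_ofZ h)

lemma ofZ_mul_pow_eq_of_isUnit {u : K[X]} (hu : IsUnit u) (c : K[X]) (L : K[x,y,z]) (d : ℕ) :
    ofZ c * L ^ d = ofZ (c * (↑hu.unit⁻¹ : K[X]) ^ d) * (ofZ u * L) ^ d := by
  have hunit : ofZ ((↑hu.unit⁻¹ : K[X]) ^ d) * ofZ u ^ d = 1 := by
    rw [← map_pow, ← map_mul, ← mul_pow, IsUnit.val_inv_mul, one_pow, map_one]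
  rw [map_mul, mul_pow]
  linear_combination (-(ofZ c * L ^ d)) * hunit

lemma inv_apply_eq_iff {φ : K[x,y,z] ≃ₐ[K] K[x,y,z]} {f g : K[x,y,z]} :
    φ⁻¹ f = g ↔ f = φ g :=
  φ.symm_apply_eq

/-- Row `i` of `(M, b)` evaluated at `(x, y) = (f, g)`. -/
def affineForm (M : Matrix (Fin 2) (Fin 2) K[X]) (b : Fin 2 → K[X]) (f g : K[x,y,z])
    (i : Fin 2) : K[x,y,z] :=
  ofZ (M i 0) * f + ofZ (M i 1) * g + ofZ (b i)

lemma apply_affineForm {φ : K[x,y,z] ≃ₐ[K] K[x,y,z]} (h : φ (X 2) = X 2)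
    (M : Matrix (Fin 2) (Fin 2) K[X]) (b : Fin 2 → K[X]) (f g : K[x,y,z]) (i : Fin 2) :
    φ (affineForm M b f g i) = affineForm M b (φ f) (φ g) i := by
  simp only [affineForm, map_add, map_mul, apply_ofZ h]

lemma affineForm_affineForm (M N : Matrix (Fin 2) (Fin 2) K[X]) (b c : Fin 2 → K[X])
    (f g : K[x,y,z]) (i : Fin 2) :
    affineForm N c (affineForm M b f g 0) (affineForm M b f g 1) i =
      affineForm (N * M) (N *ᵥ b + c) f g i := by
  simp only [affineForm, Matrix.mul_apply, Matrix.mulVec, dotProduct, Fin.sum_univ_two,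
    Pi.add_apply, map_add, map_mul]
  ring

lemma affineForm_one_zero (f g : K[x,y,z]) :
    affineForm 1 0 f g 0 = f ∧ affineForm 1 0 f g 1 = g := by
  simp [affineForm]

def affZ : Subgroup (K[x,y,z] ≃ₐ[K] K[x,y,z]) where
  carrier := {φ | φ (X 2) = X 2 ∧ ∃ (M : Matrix (Fin 2) (Fin 2) K[X]) (b : Fin 2 → K[X]),
    IsUnit M.det ∧ φ (X 0) = affineForm M b (X 0) (X 1) 0 ∧
      φ (X 1) = affineForm M b (X 0) (X 1) 1}
  one_mem' := ⟨rfl, 1, 0, by simp, by simp [affineForm_one_zero]⟩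
  mul_mem' := by
    rintro φ ψ ⟨hφ2, M, b, hM, hφ0, hφ1⟩ ⟨hψ2, N, c, hN, hψ0, hψ1⟩
    refine ⟨by simp [hψ2, hφ2], N * M, N *ᵥ b + c, by simpa using hN.mul hM, ?_, ?_⟩ <;>
    simp only [AlgEquiv.mul_apply, hψ0, hψ1, apply_affineForm hφ2, hφ0, hφ1,
      affineForm_affineForm]
  inv_mem' := by
    rintro φ ⟨hφ2, M, b, hM, hφ0, hφ1⟩
    have hinv : ∀ i, φ (affineForm M⁻¹ (-(M⁻¹ *ᵥ b)) (X 0) (X 1) i) =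
        affineForm 1 0 (X 0) (X 1) i := fun i => by
      rw [apply_affineForm hφ2, hφ0, hφ1, affineForm_affineForm, Matrix.nonsing_inv_mul M hM,
        add_neg_cancel]
    refine ⟨inv_apply_eq_iff.mpr hφ2.symm, M⁻¹, -(M⁻¹ *ᵥ b),
      Matrix.isUnit_nonsing_inv_det M hM, ?_, ?_⟩ <;> rw [inv_apply_eq_iff]
    · rw [hinv, (affineForm_one_zero _ _).1]
    · rw [hinv, (affineForm_one_zero _ _).2]

def linY (β : K) (ρ : K[X]) : K[X][X] :=
  Polynomial.C (Polynomial.C β) * Polynomial.X + Polynomial.C ρ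

@[simp] lemma eval₂_ofZ_linY (β : K) (ρ : K[X]) (g : K[x,y,z]) :
    (linY β ρ).eval₂ ofZ g = C β * g + ofZ ρ := by
  simp [linY]

def triZ : Subgroup (K[x,y,z] ≃ₐ[K] K[x,y,z]) where
  carrier := {φ | φ (X 2) = X 2 ∧ ∃ (a b : Kˣ) (q : K[X][X]) (r : K[X]),
    φ (X 0) = C (a : K) * X 0 + q.eval₂ ofZ (X 1) ∧ φ (X 1) = C (b : K) * X 1 + ofZ r}
  one_mem' := ⟨rfl, 1, 1, 0, 0, by simp, by simp⟩
  mul_mem' := by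
    rintro φ ψ ⟨hφ2, a, b, q, r, hφ0, hφ1⟩ ⟨hψ2, a', b', q', r', hψ0, hψ1⟩
    refine ⟨by simp [hψ2, hφ2], a' * a, b' * b,
      Polynomial.C (Polynomial.C (a' : K)) * q + q'.comp (linY b r),
      Polynomial.C (b' : K) * r + r', ?_, ?_⟩
    · rw [AlgEquiv.mul_apply, hψ0, map_add, map_mul, algEquiv_apply_C, apply_eval₂_ofZ hφ2, hφ0,
        hφ1, ← eval₂_ofZ_linY, ← Polynomial.eval₂_comp]
      simp only [Polynomial.eval₂_add, Polynomial.eval₂_mul, Polynomial.eval₂_C, ofZ_C,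
        Units.val_mul, map_mul]
      ring
    · rw [AlgEquiv.mul_apply, hψ1, map_add, map_mul, algEquiv_apply_C, apply_ofZ hφ2, hφ1]
      simp only [map_add, map_mul, ofZ_C, Units.val_mul]
      ring
  inv_mem' := by
    rintro φ ⟨hφ2, a, b, q, r, hφ0, hφ1⟩
    set s := linY ((b⁻¹ : Kˣ) : K) (-(Polynomial.C ((b⁻¹ : Kˣ) : K) * r))
    have hs : s.eval₂ ofZ (φ (X 1)) = X 1 := by
      rw [eval₂_ofZ_linY, hφ1, map_neg, map_mul, ofZ_C, mul_add, ← mul_assoc, ← map_mul,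
        Units.inv_mul, map_one, one_mul, add_neg_cancel_right]
    refine ⟨inv_apply_eq_iff.mpr hφ2.symm, a⁻¹, b⁻¹,
      -Polynomial.C (Polynomial.C ((a⁻¹ : Kˣ) : K)) * q.comp s,
      -(Polynomial.C ((b⁻¹ : Kˣ) : K) * r), inv_apply_eq_iff.mpr ?_, inv_apply_eq_iff.mpr ?_⟩
    · rw [map_add, map_mul, algEquiv_apply_C, apply_eval₂_ofZ hφ2, Polynomial.eval₂_mul,
        Polynomial.eval₂_comp, hs, hφ0]
      simp only [Polynomial.eval₂_neg, Polynomial.eval₂_C, ofZ_C]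
      rw [mul_add, ← mul_assoc, ← map_mul, Units.inv_mul, map_one, one_mul, neg_mul,
        add_neg_cancel_right]
    · rw [← eval₂_ofZ_linY, apply_eval₂_ofZ hφ2, hs]

lemma mem_triZ_of_lower_eq_zero {φ : K[x,y,z] ≃ₐ[K] K[x,y,z]} (h2 : φ (X 2) = X 2)
    {M : Matrix (Fin 2) (Fin 2) K[X]} {b : Fin 2 → K[X]} (hM : IsUnit M.det)
    (h0 : φ (X 0) = affineForm M b (X 0) (X 1) 0) (h1 : φ (X 1) = affineForm M b (X 0) (X 1) 1)
    (hM10 : M 1 0 = 0) : φ ∈ triZ := by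
  rw [Matrix.det_fin_two, hM10, mul_zero, sub_zero] at hM
  obtain ⟨u, hu, hu'⟩ := Polynomial.isUnit_iff.mp (isUnit_of_mul_isUnit_left hM)
  obtain ⟨v, hv, hv'⟩ := Polynomial.isUnit_iff.mp (isUnit_of_mul_isUnit_right hM)
  refine ⟨h2, hu.unit, hv.unit, Polynomial.C (M 0 1) * Polynomial.X + Polynomial.C (b 0),
    b 1, ?_, ?_⟩
  · simp [h0, affineForm, ← hu', add_assoc]
  · simp [h1, affineForm, hM10, ← hv']

lemma mem_affZ_of_natDegree_le_one {φ : K[x,y,z] ≃ₐ[K] K[x,y,z]} (h2 : φ (X 2) = X 2)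
    {a b : Kˣ} {q : K[X][X]} {r : K[X]} (h0 : φ (X 0) = C (a : K) * X 0 + q.eval₂ ofZ (X 1))
    (h1 : φ (X 1) = C (b : K) * X 1 + ofZ r) (hq : q.natDegree ≤ 1) : φ ∈ affZ := by
  refine ⟨h2, !![Polynomial.C (a : K), q.coeff 1; 0, Polynomial.C (b : K)], ![q.coeff 0, r],
    by simp [Matrix.det_fin_two], ?_, ?_⟩
  · rw [h0, Polynomial.eq_X_add_C_of_natDegree_le_one hq]
    simp [affineForm, add_assoc]
  · simp [h1, affineForm]

lemma mem_affZ_of_isZAffine {φ : K[x,y,z] ≃ₐ[K] K[x,y,z]} (h : IsZAffine K φ) : φ ∈ affZ := by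
  obtain ⟨h2, a, b, ha, h0, h1⟩ := h
  refine ⟨h2, (Polynomial.C : K →+* K[X]).mapMatrix aᵀ, b, ?_, ?_, ?_⟩
  · rw [← RingHom.map_det, Matrix.det_transpose]
    exact ha.map _
  · simp [h0, affineForm, ofZ_apply]
  · simp [h1, affineForm, ofZ_apply]

lemma eval₂_ofZ_toPolynomial (p : MvPolynomial (Fin 2) K) :
    (aeval ![Polynomial.X, Polynomial.C Polynomial.X] p : K[X][X]).eval₂ ofZ (X 1) =
      aeval ![X 1, X 2] p := by
  induction p using MvPolynomial.induction_on with
  | C a => simp [algebraMap_eq, Polynomial.eval₂_C]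
  | add p q hp hq => simp only [map_add, Polynomial.eval₂_add, hp, hq]
  | mul_X p i hp =>
    simp only [map_mul, Polynomial.eval₂_mul, hp]
    fin_cases i <;> simp

lemma mem_triZ_of_isZTriangular {φ : K[x,y,z] ≃ₐ[K] K[x,y,z]} (h : IsZTriangular K φ) :
    φ ∈ triZ := by
  obtain ⟨h2, α₁, α₂, p₁, p₂, h0, h1⟩ := h
  exact ⟨h2, α₁, α₂, aeval ![Polynomial.X, Polynomial.C Polynomial.X] p₁, p₂,
    by rw [h0, eval₂_ofZ_toPolynomial], h1⟩

lemma zTame_le_affZ_sup_triZ : ZTame K ≤ affZ ⊔ triZ :=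
  Subgroup.closure_le _ |>.mpr fun _ h => h.elim
    (fun h => Subgroup.mem_sup_left (mem_affZ_of_isZAffine h))
    (fun h => Subgroup.mem_sup_right (mem_triZ_of_isZTriangular h))

/-- `x ↦ x t, y ↦ y t, z ↦ z`: the `t`-degree is the total degree in `x, y` over `K[z]`, and the
leading coefficient is the top homogeneous component. -/
def gradeXY : K[x,y,z] →ₐ[K] K[x,y,z][X] :=
  aeval ![Polynomial.C (X 0) * Polynomial.X, Polynomial.C (X 1) * Polynomial.X,
    Polynomial.C (X 2)]

def xyDeg (f : K[x,y,z]) : ℕ := (gradeXY f).natDegree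

def xyLead (f : K[x,y,z]) : K[x,y,z] := (gradeXY f).leadingCoeff

@[simp] lemma gradeXY_X_zero : gradeXY (X 0 : K[x,y,z]) = Polynomial.C (X 0) * Polynomial.X := by
  simp [gradeXY]

@[simp] lemma gradeXY_X_one : gradeXY (X 1 : K[x,y,z]) = Polynomial.C (X 1) * Polynomial.X := by
  simp [gradeXY]

@[simp] lemma gradeXY_X_two : gradeXY (X 2 : K[x,y,z]) = Polynomial.C (X 2) := by
  simp [gradeXY]

@[simp] lemma gradeXY_ofZ (r : K[X]) : gradeXY (ofZ r) = Polynomial.C (ofZ r) := by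
  rw [ofZ_apply, ← Polynomial.aeval_algHom_apply, gradeXY_X_two]
  exact Polynomial.aeval_algHom_apply (Polynomial.CAlgHom : K[x,y,z] →ₐ[K] _) (X 2) r

lemma gradeXY_eval₂_ofZ (g : K[x,y,z]) (q : K[X][X]) :
    gradeXY (q.eval₂ ofZ g) = (q.map ofZ).comp (gradeXY g) := by
  rw [← RingHom.coe_coe gradeXY, Polynomial.hom_eval₂, Polynomial.comp, Polynomial.eval₂_map]
  congr 1
  exact RingHom.ext gradeXY_ofZ

lemma xyDeg_ofZ (r : K[X]) : xyDeg (ofZ r) = 0 := by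
  simp [xyDeg]

lemma xyDeg_ofZ_mul_le (r : K[X]) (f : K[x,y,z]) : xyDeg (ofZ r * f) ≤ xyDeg f := by
  simpa [xyDeg] using Polynomial.natDegree_C_mul_le _ _

lemma xyDeg_ofZ_mul {r : K[X]} (hr : r ≠ 0) (f : K[x,y,z]) : xyDeg (ofZ r * f) = xyDeg f := by
  simpa [xyDeg] using Polynomial.natDegree_C_mul ((map_ne_zero_iff _ ofZ_injective).mpr hr)

lemma xyLead_ofZ_mul (r : K[X]) (f : K[x,y,z]) : xyLead (ofZ r * f) = ofZ r * xyLead f := by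
  simp [xyLead]

lemma xyDeg_add_le (f g : K[x,y,z]) : xyDeg (f + g) ≤ max (xyDeg f) (xyDeg g) := by
  simpa [xyDeg] using Polynomial.natDegree_add_le _ _

lemma xyDeg_add_of_lt {f g : K[x,y,z]} (h : xyDeg g < xyDeg f) : xyDeg (f + g) = xyDeg f := by
  simpa [xyDeg] using Polynomial.natDegree_add_eq_left_of_natDegree_lt h

lemma xyLead_add_of_lt {f g : K[x,y,z]} (h : xyDeg g < xyDeg f) : xyLead (f + g) = xyLead f := by
  simpa [xyLead] using Polynomial.leadingCoeff_add_of_degree_lt' (Polynomial.degree_lt_degree h)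

lemma xyDeg_eval₂_ofZ (g : K[x,y,z]) (q : K[X][X]) :
    xyDeg (q.eval₂ ofZ g) = q.natDegree * xyDeg g := by
  rw [xyDeg, gradeXY_eval₂_ofZ, Polynomial.natDegree_comp,
    Polynomial.natDegree_map_eq_of_injective ofZ_injective, xyDeg]

lemma xyLead_eval₂_ofZ {g : K[x,y,z]} (hg : xyDeg g ≠ 0) (q : K[X][X]) :
    xyLead (q.eval₂ ofZ g) = ofZ q.leadingCoeff * xyLead g ^ q.natDegree := by
  rw [xyLead, gradeXY_eval₂_ofZ, Polynomial.leadingCoeff_comp hg,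
    Polynomial.leadingCoeff_map_of_injective ofZ_injective,
    Polynomial.natDegree_map_eq_of_injective ofZ_injective, xyLead]

lemma xyDeg_X_zero : xyDeg (X 0 : K[x,y,z]) = 1 := by
  simp [xyDeg]

lemma xyDeg_X_one : xyDeg (X 1 : K[x,y,z]) = 1 := by
  simp [xyDeg]

lemma xyDeg_affineForm_le (M : Matrix (Fin 2) (Fin 2) K[X]) (b : Fin 2 → K[X]) (f g : K[x,y,z])
    (i : Fin 2) : xyDeg (affineForm M b f g i) ≤ max (xyDeg f) (xyDeg g) := by
  refine (xyDeg_add_le _ _).trans (max_le ((xyDeg_add_le _ _).trans ?_) (by simp [xyDeg_ofZ]))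
  exact max_le_max (xyDeg_ofZ_mul_le _ _) (xyDeg_ofZ_mul_le _ _)

lemma xyDeg_affineForm_X {M : Matrix (Fin 2) (Fin 2) K[X]} {i : Fin 2}
    (hM : M i 0 ≠ 0 ∨ M i 1 ≠ 0) (b : Fin 2 → K[X]) :
    xyDeg (affineForm M b (X 0) (X 1) i) = 1 := by
  have hlin : ofZ (M i 0) * X 0 + ofZ (M i 1) * X 1 ≠ 0 := fun h => by
    have h₀ := congrArg (evalXY 1 0) h
    have h₁ := congrArg (evalXY 0 1) h
    simp only [map_add, map_mul, map_zero, evalXY_ofZ] at h₀ h₁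
    simp [evalXY] at h₀ h₁
    tauto
  have hgrade : gradeXY (affineForm M b (X 0) (X 1) i) =
      Polynomial.C (ofZ (M i 0) * X 0 + ofZ (M i 1) * X 1) * Polynomial.X +
        Polynomial.C (ofZ (b i)) := by
    simp only [affineForm, map_add, map_mul, gradeXY_ofZ, gradeXY_X_zero, gradeXY_X_one]
    ring
  rw [xyDeg, hgrade, Polynomial.natDegree_linear hlin]

lemma xyDeg_xyLead_affineForm_of_lt {M : Matrix (Fin 2) (Fin 2) K[X]} {i : Fin 2}
    (hM : M i 0 ≠ 0) (b : Fin 2 → K[X]) {f g : K[x,y,z]} (hfg : xyDeg g < xyDeg f) :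
    xyDeg (affineForm M b f g i) = xyDeg f ∧
      xyLead (affineForm M b f g i) = ofZ (M i 0) * xyLead f := by
  have hrest : xyDeg (ofZ (M i 1) * g + ofZ (b i)) < xyDeg (ofZ (M i 0) * f) := by
    rw [xyDeg_ofZ_mul hM]
    refine (xyDeg_add_le _ _).trans_lt (max_lt ((xyDeg_ofZ_mul_le _ _).trans_lt hfg) ?_)
    rw [xyDeg_ofZ]
    exact Nat.zero_lt_of_lt hfg
  rw [affineForm, add_assoc, xyDeg_add_of_lt hrest, xyLead_add_of_lt hrest, xyDeg_ofZ_mul hM,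
    xyLead_ofZ_mul]
  exact ⟨rfl, rfl⟩

lemma xyDeg_xyLead_affineForm_of_eq_zero {M : Matrix (Fin 2) (Fin 2) K[X]} {i : Fin 2}
    (hM₀ : M i 0 = 0) (hM₁ : M i 1 ≠ 0) (b : Fin 2 → K[X]) (f : K[x,y,z]) {g : K[x,y,z]}
    (hg : 0 < xyDeg g) :
    xyDeg (affineForm M b f g i) = xyDeg g ∧
      xyLead (affineForm M b f g i) = ofZ (M i 1) * xyLead g := by
  have hrest : xyDeg (ofZ (b i)) < xyDeg (ofZ (M i 1) * g) := by
    rwa [xyDeg_ofZ_mul hM₁, xyDeg_ofZ]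
  rw [affineForm, hM₀, map_zero, zero_mul, zero_add, xyDeg_add_of_lt hrest,
    xyLead_add_of_lt hrest, xyDeg_ofZ_mul hM₁, xyLead_ofZ_mul]
  exact ⟨rfl, rfl⟩

def YDegDominant (φ : K[x,y,z] ≃ₐ[K] K[x,y,z]) : Prop :=
  0 < xyDeg (φ (X 1)) ∧ xyDeg (φ (X 0)) ≤ xyDeg (φ (X 1))

def HasPowerLead (φ : K[x,y,z] ≃ₐ[K] K[x,y,z]) : Prop :=
  0 < xyDeg (φ (X 1)) ∧ xyDeg (φ (X 1)) < xyDeg (φ (X 0)) ∧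
    ∃ (c : K[X]) (d : ℕ), 2 ≤ d ∧ xyLead (φ (X 0)) = ofZ c * xyLead (φ (X 1)) ^ d

lemma yDegDominant_of_mem_affZ {φ : K[x,y,z] ≃ₐ[K] K[x,y,z]} (h : φ ∈ affZ) :
    YDegDominant φ := by
  obtain ⟨-, M, b, hM, h0, h1⟩ := h
  have hrow : M 1 0 ≠ 0 ∨ M 1 1 ≠ 0 := by
    by_contra! hzero
    simp [Matrix.det_fin_two, hzero] at hM
  have hdeg0 := xyDeg_affineForm_le M b (X 0) (X 1) 0
  rw [xyDeg_X_zero, xyDeg_X_one, max_self] at hdeg0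
  rw [YDegDominant, h0, h1, xyDeg_affineForm_X hrow]
  exact ⟨one_pos, hdeg0⟩

lemma hasPowerLead_mul_of_mem_triZ {σ t : K[x,y,z] ≃ₐ[K] K[x,y,z]} (hσ2 : σ (X 2) = X 2)
    (hσ : YDegDominant σ) (ht : t ∈ triZ) (htA : t ∉ affZ) : HasPowerLead (σ * t) := by
  obtain ⟨ht2, a, b, q, r, ht0, ht1⟩ := ht
  obtain ⟨hpos, hle⟩ := hσ
  have hq : 2 ≤ q.natDegree := by
    by_contra! hq
    exact htA (mem_affZ_of_natDegree_le_one ht2 ht0 ht1 (Nat.le_of_lt_succ hq))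
  have hC (c : K) : (C c : K[x,y,z]) = ofZ (Polynomial.C c) := (ofZ_C c).symm
  have hx : (σ * t) (X 0) = q.eval₂ ofZ (σ (X 1)) + ofZ (Polynomial.C (a : K)) * σ (X 0) := by
    rw [AlgEquiv.mul_apply, ht0, map_add, map_mul, algEquiv_apply_C, apply_eval₂_ofZ hσ2, hC,
      add_comm]
  have hy : (σ * t) (X 1) = ofZ (Polynomial.C (b : K)) * σ (X 1) + ofZ r := by
    rw [AlgEquiv.mul_apply, ht1, map_add, map_mul, algEquiv_apply_C, apply_ofZ hσ2, hC]
  have hb : Polynomial.C (b : K) ≠ 0 := Polynomial.C_ne_zero.mpr b.ne_zero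
  have hdegy : xyDeg (ofZ r) < xyDeg (ofZ (Polynomial.C (b : K)) * σ (X 1)) := by
    rwa [xyDeg_ofZ, xyDeg_ofZ_mul hb]
  have hgrow : xyDeg (σ (X 1)) < xyDeg (q.eval₂ ofZ (σ (X 1))) := by
    rw [xyDeg_eval₂_ofZ]
    exact (show _ < 2 * xyDeg (σ (X 1)) by omega).trans_le (Nat.mul_le_mul_right _ hq)
  have hdegx : xyDeg (ofZ (Polynomial.C (a : K)) * σ (X 0)) < xyDeg (q.eval₂ ofZ (σ (X 1))) :=
    ((xyDeg_ofZ_mul_le _ _).trans hle).trans_lt hgrow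
  have hb' : IsUnit (Polynomial.C (b : K)) := Polynomial.isUnit_C.mpr b.isUnit
  refine ⟨?_, ?_, q.leadingCoeff * ↑hb'.unit⁻¹ ^ q.natDegree, q.natDegree, hq, ?_⟩
  · rwa [hy, xyDeg_add_of_lt hdegy, xyDeg_ofZ_mul hb]
  · rwa [hx, hy, xyDeg_add_of_lt hdegy, xyDeg_add_of_lt hdegx, xyDeg_ofZ_mul hb]
  · rw [hx, hy, xyLead_add_of_lt hdegy, xyLead_add_of_lt hdegx, xyLead_ofZ_mul,
      xyLead_eval₂_ofZ hpos.ne', ofZ_mul_pow_eq_of_isUnit hb']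

section MulAffine

variable {ψ a : MvPolynomial (Fin 3) K ≃ₐ[K] MvPolynomial (Fin 3) K}
  {M : Matrix (Fin 2) (Fin 2) K[X]} {b : Fin 2 → K[X]}

lemma mul_apply_X_eq_affineForm (hψ2 : ψ (X 2) = X 2)
    (ha : a (X 0) = affineForm M b (X 0) (X 1) 0 ∧ a (X 1) = affineForm M b (X 0) (X 1) 1) :
    (ψ * a) (X 0) = affineForm M b (ψ (X 0)) (ψ (X 1)) 0 ∧
      (ψ * a) (X 1) = affineForm M b (ψ (X 0)) (ψ (X 1)) 1 := by
  simp only [AlgEquiv.mul_apply, ha.1, ha.2, apply_affineForm hψ2, and_self]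

lemma HasPowerLead.yDegDominant_mul (hψ : HasPowerLead ψ) (hψ2 : ψ (X 2) = X 2)
    (ha : a (X 0) = affineForm M b (X 0) (X 1) 0 ∧ a (X 1) = affineForm M b (X 0) (X 1) 1)
    (hM10 : M 1 0 ≠ 0) : YDegDominant (ψ * a) := by
  obtain ⟨-, hlt, -⟩ := hψ
  obtain ⟨h0, h1⟩ := mul_apply_X_eq_affineForm hψ2 ha
  have hdeg0 := xyDeg_affineForm_le M b (ψ (X 0)) (ψ (X 1)) 0
  rw [max_eq_left hlt.le] at hdeg0
  rw [YDegDominant, h0, h1, (xyDeg_xyLead_affineForm_of_lt hM10 b hlt).1]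
  exact ⟨Nat.zero_lt_of_lt hlt, hdeg0⟩

lemma HasPowerLead.hasPowerLead_mul (hψ : HasPowerLead ψ) (hψ2 : ψ (X 2) = X 2)
    (ha : a (X 0) = affineForm M b (X 0) (X 1) 0 ∧ a (X 1) = affineForm M b (X 0) (X 1) 1)
    (hM : IsUnit M.det) (hM10 : M 1 0 = 0) : HasPowerLead (ψ * a) := by
  obtain ⟨hpos, hlt, c, d, hd, hlead⟩ := hψ
  obtain ⟨h0, h1⟩ := mul_apply_X_eq_affineForm hψ2 ha
  rw [Matrix.det_fin_two, hM10, mul_zero, sub_zero] at hM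
  have hM00 := isUnit_of_mul_isUnit_left hM
  have hM11 := isUnit_of_mul_isUnit_right hM
  obtain ⟨hdeg0, hlead0⟩ := xyDeg_xyLead_affineForm_of_lt hM00.ne_zero b hlt
  obtain ⟨hdeg1, hlead1⟩ := xyDeg_xyLead_affineForm_of_eq_zero hM10 hM11.ne_zero b (ψ (X 0)) hpos
  refine ⟨by rwa [h1, hdeg1], by rwa [h0, h1, hdeg0, hdeg1], M 0 0 * c * ↑hM11.unit⁻¹ ^ d, d,
    hd, ?_⟩
  rw [h0, h1, hlead0, hlead1, hlead, ← mul_assoc, ← map_mul]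
  exact ofZ_mul_pow_eq_of_isUnit hM11 _ _ _

lemma HasPowerLead.mul_of_mem_affZ (hψ : HasPowerLead ψ) (hψ2 : ψ (X 2) = X 2)
    (ha : a ∈ affZ) : YDegDominant (ψ * a) ∨ (a ∈ triZ ∧ HasPowerLead (ψ * a)) := by
  obtain ⟨ha2, M, b, hM, ha0, ha1⟩ := ha
  by_cases hM10 : M 1 0 = 0
  · exact .inr ⟨mem_triZ_of_lower_eq_zero ha2 hM ha0 ha1 hM10,
      hψ.hasPowerLead_mul hψ2 ⟨ha0, ha1⟩ hM hM10⟩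
  · exact .inl (hψ.yDegDominant_mul hψ2 ⟨ha0, ha1⟩ hM10)

end MulAffine

lemma not_hasPowerLead_one : ¬ HasPowerLead (1 : K[x,y,z] ≃ₐ[K] K[x,y,z]) := fun h => by
  simpa [xyDeg_X_zero, xyDeg_X_one] using h.2.1

inductive IsReduced : (K[x,y,z] ≃ₐ[K] K[x,y,z]) → Prop
  | one : IsReduced 1
  | mul {ψ a t : K[x,y,z] ≃ₐ[K] K[x,y,z]} : IsReduced ψ → a ∈ affZ → t ∈ triZ → t ∉ affZ →
      (ψ = 1 ∨ a ∉ triZ) → IsReduced (ψ * a * t)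

namespace IsReduced

variable {ψ : MvPolynomial (Fin 3) K ≃ₐ[K] MvPolynomial (Fin 3) K}

lemma apply_X_two (h : IsReduced ψ) : ψ (X 2) = X 2 := by
  induction h with
  | one => rfl
  | mul _ ha ht _ _ ih => rw [AlgEquiv.mul_apply, AlgEquiv.mul_apply, ht.1, ha.1, ih]

lemma eq_one_or_hasPowerLead (h : IsReduced ψ) : ψ = 1 ∨ HasPowerLead ψ := by
  induction h with
  | one => exact .inl rfl
  | @mul ψ a t hψ ha ht htA hψa ih =>
    refine .inr (hasPowerLead_mul_of_mem_triZ (by rw [AlgEquiv.mul_apply, ha.1, hψ.apply_X_two])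
      ?_ ht htA)
    rcases ih with rfl | hlead
    · simpa using yDegDominant_of_mem_affZ ha
    · have haT := hψa.resolve_left fun h1 => not_hasPowerLead_one (h1 ▸ hlead)
      exact ((hlead.mul_of_mem_affZ hψ.apply_X_two ha).resolve_right fun h => haT h.1)

lemma exists_mul_of_mem_triZ (h : IsReduced ψ) {u : K[x,y,z] ≃ₐ[K] K[x,y,z]} (hu : u ∈ triZ)
    (huA : u ∉ affZ) : ∃ ψ' a, IsReduced ψ' ∧ a ∈ affZ ∧ ψ * u = ψ' * a := by
  cases h with
  | one => exact ⟨1 * 1 * u, 1, one.mul affZ.one_mem hu huA (.inl rfl), affZ.one_mem, by group⟩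
  | @mul ψ a t hψ ha ht htA hψa =>
    by_cases htu : t * u ∈ affZ
    · exact ⟨ψ, a * (t * u), hψ, affZ.mul_mem ha htu, by group⟩
    · exact ⟨ψ * a * (t * u), 1, hψ.mul ha (triZ.mul_mem ht hu) htu hψa, affZ.one_mem, by group⟩

lemma exists_mul_mul {a v : K[x,y,z] ≃ₐ[K] K[x,y,z]} (h : IsReduced ψ) (ha : a ∈ affZ)
    (hv : v ∈ affZ ∨ v ∈ triZ) : ∃ ψ' a', IsReduced ψ' ∧ a' ∈ affZ ∧ ψ * a * v = ψ' * a' := by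
  by_cases hvA : v ∈ affZ
  · exact ⟨ψ, a * v, h, affZ.mul_mem ha hvA, by group⟩
  have hvT := hv.resolve_left hvA
  by_cases haT : a ∈ triZ
  · have hav : a * v ∉ affZ := fun hav => hvA (by simpa using affZ.mul_mem (affZ.inv_mem ha) hav)
    rw [mul_assoc]
    exact h.exists_mul_of_mem_triZ (triZ.mul_mem haT hvT) hav
  · exact ⟨ψ * a * v, 1, h.mul ha hvT hvA (.inr haT), affZ.one_mem, by group⟩

end IsReduced

lemma exists_isReduced_mul_of_mem_sup {φ : K[x,y,z] ≃ₐ[K] K[x,y,z]} (h : φ ∈ affZ ⊔ triZ) :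
    ∃ ψ a, IsReduced ψ ∧ a ∈ affZ ∧ φ = ψ * a := by
  rw [← affZ.closure_eq, ← triZ.closure_eq, ← Subgroup.closure_union] at h
  induction h using Subgroup.closure_induction_right with
  | one => exact ⟨1, 1, .one, affZ.one_mem, by group⟩
  | mul_right _ _ v hv ih =>
    obtain ⟨ψ, a, hψ, ha, rfl⟩ := ih
    exact hψ.exists_mul_mul ha hv
  | mul_inv_cancel _ _ v hv ih =>
    obtain ⟨ψ, a, hψ, ha, rfl⟩ := ih
    exact hψ.exists_mul_mul ha (hv.imp affZ.inv_mem triZ.inv_mem)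

lemma yDegDominant_or_hasPowerLead_of_mem_sup {φ : K[x,y,z] ≃ₐ[K] K[x,y,z]}
    (h : φ ∈ affZ ⊔ triZ) : YDegDominant φ ∨ HasPowerLead φ := by
  obtain ⟨ψ, a, hψ, ha, rfl⟩ := exists_isReduced_mul_of_mem_sup h
  rcases hψ.eq_one_or_hasPowerLead with rfl | hlead
  · simpa using .inl (yDegDominant_of_mem_affZ ha)
  · exact (hlead.mul_of_mem_affZ hψ.apply_X_two ha).imp_right And.right

/-- `exp (s D)` for the locally nilpotent derivation `D = -2y w ∂ₓ + z w ∂_y`, `w = y² + xz`,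
which kills `z` and `w`; `ν` is `nagataFlow 1`. -/
def nagataFlow (s : K) : K[x,y,z] →ₐ[K] K[x,y,z] :=
  aeval ![X 0 - 2 * C s * X 1 * (X 1 ^ 2 + X 0 * X 2) - C s ^ 2 * X 2 * (X 1 ^ 2 + X 0 * X 2) ^ 2,
    X 1 + C s * X 2 * (X 1 ^ 2 + X 0 * X 2), X 2]

lemma nagataFlow_comp (s t : K) :
    (nagataFlow s).comp (nagataFlow t) = nagataFlow (s + t) := by
  refine MvPolynomial.algHom_ext fun i => ?_
  fin_cases i <;>
    simp only [nagataFlow, Fin.zero_eta, Fin.mk_one, Fin.reduceFinMk, AlgHom.coe_comp,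
      Function.comp_apply, aeval_X, map_add, map_sub, map_mul, map_pow, map_ofNat, algHom_C,
      algebraMap_eq, Matrix.cons_val_zero, Matrix.cons_val_one, Matrix.cons_val_two,
      Matrix.head_cons, Matrix.tail_cons] <;>
    ring

lemma nagataFlow_zero : nagataFlow (0 : K) = AlgHom.id K K[x,y,z] := by
  refine MvPolynomial.algHom_ext fun i => ?_
  fin_cases i <;> simp [nagataFlow]

def nagata : K[x,y,z] ≃ₐ[K] K[x,y,z] :=
  AlgEquiv.ofAlgHom (nagataFlow 1) (nagataFlow (-1))
    (by rw [nagataFlow_comp, add_neg_cancel, nagataFlow_zero])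
    (by rw [nagataFlow_comp, neg_add_cancel, nagataFlow_zero])

lemma nagata_apply_X_zero : nagata (X 0 : K[x,y,z]) =
    X 0 - 2 * X 1 * (X 1 ^ 2 + X 0 * X 2) - X 2 * (X 1 ^ 2 + X 0 * X 2) ^ 2 := by
  simp [nagata, nagataFlow]

lemma nagata_apply_X_one : nagata (X 1 : K[x,y,z]) = X 1 + X 2 * (X 1 ^ 2 + X 0 * X 2) := by
  simp [nagata, nagataFlow]

lemma nagata_apply_X_two : nagata (X 2 : K[x,y,z]) = X 2 := by
  simp [nagata, nagataFlow]

lemma xyDeg_xyLead_nagata_apply_X_one :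
    xyDeg (nagata (X 1 : K[x,y,z])) = 2 ∧ xyLead (nagata (X 1 : K[x,y,z])) = X 2 * X 1 ^ 2 := by
  have hgrade : gradeXY (nagata (X 1 : K[x,y,z])) =
      Polynomial.C (X 2 * X 1 ^ 2) * Polynomial.X ^ 2 +
        Polynomial.C (X 1 + X 0 * X 2 ^ 2) * Polynomial.X := by
    simp only [nagata_apply_X_one, map_add, map_mul, map_pow, gradeXY_X_zero, gradeXY_X_one,
      gradeXY_X_two]
    ring
  have hdeg : xyDeg (nagata (X 1 : K[x,y,z])) = 2 := by
    rw [xyDeg, hgrade]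
    compute_degree!
  refine ⟨hdeg, ?_⟩
  rw [xyLead, Polynomial.leadingCoeff, ← xyDeg, hdeg, hgrade]
  simp only [Polynomial.coeff_add, Polynomial.coeff_C_mul_X_pow, Polynomial.coeff_C_mul_X]
  norm_num

lemma xyDeg_xyLead_nagata_apply_X_zero :
    xyDeg (nagata (X 0 : K[x,y,z])) = 4 ∧ xyLead (nagata (X 0 : K[x,y,z])) = -(X 2 * X 1 ^ 4) := by
  have hgrade : gradeXY (nagata (X 0 : K[x,y,z])) =
      Polynomial.C (-(X 2 * X 1 ^ 4)) * Polynomial.X ^ 4 +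
      Polynomial.C (-(2 * X 1 ^ 3) - 2 * X 0 * X 1 ^ 2 * X 2 ^ 2) * Polynomial.X ^ 3 +
      Polynomial.C (-(2 * X 0 * X 1 * X 2) - X 0 ^ 2 * X 2 ^ 3) * Polynomial.X ^ 2 +
      Polynomial.C (X 0) * Polynomial.X := by
    simp only [nagata_apply_X_zero, map_add, map_sub, map_neg, map_mul, map_pow, map_ofNat,
      gradeXY_X_zero, gradeXY_X_one, gradeXY_X_two]
    ring
  have hdeg : xyDeg (nagata (X 0 : K[x,y,z])) = 4 := by
    rw [xyDeg, hgrade]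
    compute_degree!
  refine ⟨hdeg, ?_⟩
  rw [xyLead, Polynomial.leadingCoeff, ← xyDeg, hdeg, hgrade]
  simp only [Polynomial.coeff_add, Polynomial.coeff_C_mul_X_pow, Polynomial.coeff_C_mul_X]
  norm_num

lemma not_yDegDominant_nagata : ¬ YDegDominant (nagata : K[x,y,z] ≃ₐ[K] K[x,y,z]) := by
  rw [YDegDominant, xyDeg_xyLead_nagata_apply_X_zero.1, xyDeg_xyLead_nagata_apply_X_one.1]
  omega

lemma not_hasPowerLead_nagata : ¬ HasPowerLead (nagata : K[x,y,z] ≃ₐ[K] K[x,y,z]) := by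
  rintro ⟨-, -, c, d, hd, hlead⟩
  rw [xyDeg_xyLead_nagata_apply_X_zero.2, xyDeg_xyLead_nagata_apply_X_one.2] at hlead
  -- at `x = 0, y = 1` this reads `-z = c z ^ d`, impossible for `d ≥ 2`
  have hz := congrArg (evalXY 0 1) hlead
  simp only [map_neg, map_mul, map_pow, evalXY_ofZ] at hz
  simp only [evalXY, aeval_X, Matrix.cons_val_zero, Matrix.cons_val_one, Matrix.cons_val_two,
    Matrix.head_cons, Matrix.tail_cons, one_pow, mul_one] at hz
  have hdvd : (Polynomial.X : K[X]) ^ 2 ∣ Polynomial.X := by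
    rw [← dvd_neg, hz]
    exact (pow_dvd_pow _ hd).mul_left c
  simpa using Polynomial.natDegree_le_of_dvd hdvd Polynomial.X_ne_zero

end Nagata

/-- The Nagata automorphism is `z`-wild. -/
theorem nagata_is_z_wild :
    ∃ ν : MvPolynomial (Fin 3) K ≃ₐ[K] MvPolynomial (Fin 3) K,
      (ν (X 0) = X 0 - 2 * X 1 * (X 1 ^ 2 + X 0 * X 2) - X 2 * (X 1 ^ 2 + X 0 * X 2) ^ 2 ∧
       ν (X 1) = X 1 + X 2 * (X 1 ^ 2 + X 0 * X 2) ∧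
       ν (X 2) = X 2) ∧
      ν ∉ ZTame K := by
  refine ⟨Nagata.nagata, ⟨Nagata.nagata_apply_X_zero, Nagata.nagata_apply_X_one,
    Nagata.nagata_apply_X_two⟩, fun hν => ?_⟩
  rcases Nagata.yDegDominant_or_hasPowerLead_of_mem_sup (Nagata.zTame_le_affZ_sup_triZ hν) with
    h | h
  · exact Nagata.not_yDegDominant_nagata h
  · exact Nagata.not_hasPowerLead_nagata h
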